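/- arXiv:2508.17752 — 3 statements merged into one kernel-verified Lean document; each statement's English description precedes it below -/
import Mathlib

section
/- For ℓ ∈ 1/2 + ℕ₀, the bracket modification [P_{m,i}, P_{n,j}] = δ_{i,j} δ_{m+n,2ℓ} b_m M with b_m = (-1)^{m+ℓ+1/2}(2ℓ-m)! m!, together with M central, defines a Lie algebra structure on cga_ℓ(d,ℂ) ⊕ ℂM (i.e., the Jacobi identity holds); in particular b_m = -b_{2ℓ-m}, so the modified bracket is antisymmetric. -/
noncomputable section

/-- Kronecker delta. -/
def kron {d : ℕ} (i j : Fin d) : ℂ := if i = j then 1 else 0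

/-- `IsCGA d N H D C M P` says that the Lie algebra `g`, together with the
distinguished elements `H, D, C`, `M i j` and `P n i` (with `P n i = 0` for `n > N`),
is (a presentation of) the complex conformal Galilei algebra `cga_ℓ(d,ℂ)` with `2ℓ = N`. -/
structure IsCGA (d N : ℕ) {g : Type*} [LieRing g] [LieAlgebra ℂ g]
    (H D C : g) (M : Fin d → Fin d → g) (P : ℕ → Fin d → g) : Prop where
  skewM : ∀ i j, M j i = - M i j
  bMM : ∀ i j k r, ⁅M i j, M k r⁆ =
      (-(kron i k)) • M j r - (kron j r) • M i k + (kron i r) • M j k + (kron j k) • M i r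
  bDH : ⁅D, H⁆ = (2 : ℂ) • H
  bCH : ⁅C, H⁆ = D
  bDC : ⁅D, C⁆ = (-2 : ℂ) • C
  bHM : ∀ i j, ⁅H, M i j⁆ = 0
  bDM : ∀ i j, ⁅D, M i j⁆ = 0
  bCM : ∀ i j, ⁅C, M i j⁆ = 0
  bMP : ∀ i j k, ∀ n : ℕ, ⁅M i j, P n k⁆ = (-(kron i k)) • P n j + (kron j k) • P n i
  bHP : ∀ n ≤ N, ∀ i, ⁅H, P n i⁆ = (-(n : ℂ)) • P (n - 1) i
  bDP : ∀ n ≤ N, ∀ i, ⁅D, P n i⁆ = ((N : ℂ) - 2 * n) • P n i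
  bCP : ∀ n ≤ N, ∀ i, ⁅C, P n i⁆ = ((N : ℂ) - n) • P (n + 1) i
  bPP : ∀ m n : ℕ, ∀ i j, ⁅P m i, P n j⁆ = 0
  Pbound : ∀ n : ℕ, N < n → ∀ i, P n i = 0
  spans : Submodule.span ℂ
      (({H, D, C} : Set g) ∪ {x | ∃ i j, x = M i j} ∪ {x | ∃ n i, x = P n i}) = ⊤
  dim : Module.finrank ℂ g = d * (d - 1) / 2 + (N + 1) * d + 3

/-- The abelian ideal `V = span{P_{n,i}}`. -/
def VSpan {d : ℕ} {g : Type*} [LieRing g] [LieAlgebra ℂ g]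
    (N : ℕ) (P : ℕ → Fin d → g) : Submodule ℂ g :=
  Submodule.span ℂ {x | ∃ n ≤ N, ∃ i, x = P n i}

/-- Structure constants of the mass central extension: `b_m = (-1)^{m+ℓ+1/2}(2ℓ-m)! m!`
with `2ℓ = N` odd, so `ℓ + 1/2 = (N+1)/2`. -/
def bcoef (N m : ℕ) : ℂ :=
  (-1 : ℂ) ^ (m + (N + 1) / 2) * (N - m).factorial * m.factorial

/-- `IsCGAHat d N H D C M P Mc`: presentation of the mass central extension
`ĉga_ℓ(d,ℂ)` with `2ℓ = N`, central element `Mc`. -/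
structure IsCGAHat (d N : ℕ) {g : Type*} [LieRing g] [LieAlgebra ℂ g]
    (H D C : g) (M : Fin d → Fin d → g) (P : ℕ → Fin d → g) (Mc : g) : Prop where
  skewM : ∀ i j, M j i = - M i j
  bMM : ∀ i j k r, ⁅M i j, M k r⁆ =
      (-(kron i k)) • M j r - (kron j r) • M i k + (kron i r) • M j k + (kron j k) • M i r
  bDH : ⁅D, H⁆ = (2 : ℂ) • H
  bCH : ⁅C, H⁆ = D
  bDC : ⁅D, C⁆ = (-2 : ℂ) • C
  bHM : ∀ i j, ⁅H, M i j⁆ = 0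
  bDM : ∀ i j, ⁅D, M i j⁆ = 0
  bCM : ∀ i j, ⁅C, M i j⁆ = 0
  bMP : ∀ i j k, ∀ n : ℕ, ⁅M i j, P n k⁆ = (-(kron i k)) • P n j + (kron j k) • P n i
  bHP : ∀ n ≤ N, ∀ i, ⁅H, P n i⁆ = (-(n : ℂ)) • P (n - 1) i
  bDP : ∀ n ≤ N, ∀ i, ⁅D, P n i⁆ = ((N : ℂ) - 2 * n) • P n i
  bCP : ∀ n ≤ N, ∀ i, ⁅C, P n i⁆ = ((N : ℂ) - n) • P (n + 1) i
  bPP : ∀ m n : ℕ, ∀ i j, ⁅P m i, P n j⁆ =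
      (kron i j * (if m + n = N then bcoef N m else 0)) • Mc
  central : ∀ x : g, ⁅x, Mc⁆ = 0
  Pbound : ∀ n : ℕ, N < n → ∀ i, P n i = 0
  spans : Submodule.span ℂ
      (({H, D, C, Mc} : Set g) ∪ {x | ∃ i j, x = M i j} ∪ {x | ∃ n i, x = P n i}) = ⊤
  dim : Module.finrank ℂ g = d * (d - 1) / 2 + (N + 1) * d + 4

/-- A bundled realization of the mass central extension `ĉga_ℓ(d,ℂ)`. -/
structure CGAHatAlg (d N : ℕ) where
  g : Type
  [lieRing : LieRing g]
  [lieAlg : LieAlgebra ℂ g]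
  H : g
  D : g
  C : g
  M : Fin d → Fin d → g
  P : ℕ → Fin d → g
  Mc : g
  isHat : @IsCGAHat d N g lieRing lieAlg H D C M P Mc

namespace CGAC

lemma kron_comm {d : ℕ} (i j : Fin d) : kron i j = kron j i := by
  simp [kron, eq_comm]

lemma bcoef_skew {N : ℕ} (hN : Odd N) {m : ℕ} (hm : m ≤ N) :
    bcoef N m = - bcoef N (N - m) := by
  unfold bcoef
  have h1 : N - (N - m) = m := by omega
  rw [h1]
  have key : (-1 : ℂ) ^ (m + (N+1)/2) * ((-1 : ℂ) ^ (N - m + (N+1)/2)) = -1 := by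
    rw [← pow_add]
    have : m + (N+1)/2 + (N - m + (N+1)/2) = N + 2 * ((N+1)/2) := by omega
    rw [this, pow_add, pow_mul]
    simp [hN.neg_one_pow]
  have h2 : (-1 : ℂ) ^ (m + (N+1)/2) = - ((-1 : ℂ) ^ (N - m + (N+1)/2)) := by
    have hu : (-1 : ℂ) ^ (N - m + (N+1)/2) * ((-1 : ℂ) ^ (N - m + (N+1)/2)) = 1 := by
      rw [← pow_add, ← two_mul, pow_mul]; simp
    calc (-1 : ℂ) ^ (m + (N+1)/2)
        = (-1 : ℂ) ^ (m + (N+1)/2) * ((-1 : ℂ) ^ (N - m + (N+1)/2) * ((-1 : ℂ) ^ (N - m + (N+1)/2))) := by rw [hu, mul_one]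
      _ = ((-1 : ℂ) ^ (m + (N+1)/2) * ((-1 : ℂ) ^ (N - m + (N+1)/2))) * ((-1 : ℂ) ^ (N - m + (N+1)/2)) := by ring
      _ = - ((-1 : ℂ) ^ (N - m + (N+1)/2)) := by rw [key]; ring
  rw [h2]; ring

/-- `(m+1) b_m + (N - m) b_{m+1} = 0` when `m < N`. -/
lemma bcoef_C {N m : ℕ} (hm : m < N) :
    ((m : ℂ) + 1) * bcoef N m + ((N - m : ℕ) : ℂ) * bcoef N (m + 1) = 0 := by
  obtain ⟨a, ha⟩ : ∃ a, N - m = a + 1 := ⟨N - m - 1, by omega⟩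
  have h2 : N - (m + 1) = a := by omega
  unfold bcoef
  rw [ha, h2]
  rw [show m + 1 + (N+1)/2 = (m + (N+1)/2) + 1 from by omega]
  rw [pow_succ, Nat.factorial_succ, Nat.factorial_succ]
  push_cast
  ring


/-- Basis index type for `ĉga_ℓ(d,ℂ)`. -/
inductive Bs (d N : ℕ) : Type
  | H | D | C | Mc
  | E (p : {p : Fin d × Fin d // p.1 < p.2})
  | P (p : Fin (N+1) × Fin d)
  deriving DecidableEq, Fintype

/-- Underlying vector space. -/
abbrev gV (d N : ℕ) : Type := Bs d N →₀ ℂ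

variable {d N : ℕ}

open Finsupp Matrix

def eH : gV d N := single .H 1
def eD : gV d N := single .D 1
def eC : gV d N := single .C 1
def eZ : gV d N := single .Mc 1

def em (i j : Fin d) : gV d N :=
  if h : i < j then single (.E ⟨(i, j), h⟩) 1 else 0

def eM (i j : Fin d) : gV d N := em i j - em j i

def eP (n : ℕ) (i : Fin d) : gV d N :=
  if h : n < N + 1 then single (.P (⟨n, h⟩, i)) 1 else 0

lemma eM_skew (i j : Fin d) : (eM j i : gV d N) = - eM i j := by
  simp only [eM]; abel

lemma eM_lt {i j : Fin d} (h : i < j) :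
    (eM i j : gV d N) = Finsupp.single (.E ⟨(i, j), h⟩) 1 := by
  simp [eM, em, h, asymm h]

lemma eM_self (i : Fin d) : (eM i i : gV d N) = 0 := by simp [eM]

lemma eP_of_le {n : ℕ} (h : n ≤ N) (i : Fin d) :
    (eP n i : gV d N) = Finsupp.single (.P (⟨n, by omega⟩, i)) 1 := by
  simp [eP, Nat.lt_succ_of_le h]

lemma eP_of_gt {n : ℕ} (h : N < n) (i : Fin d) : (eP n i : gV d N) = 0 := by
  have : ¬ n < N + 1 := by omega
  simp [eP, this]

/-- structure constants -/
def brkt : Bs d N → Bs d N → gV d N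
  | .D, .H => (2 : ℂ) • eH
  | .H, .D => -((2 : ℂ) • eH)
  | .C, .H => eD
  | .H, .C => -eD
  | .D, .C => (-2 : ℂ) • eC
  | .C, .D => -((-2 : ℂ) • eC)
  | .E ⟨(i, j), _⟩, .E ⟨(k, r), _⟩ =>
      (-(kron i k)) • eM j r - (kron j r) • eM i k + (kron i r) • eM j k + (kron j k) • eM i r
  | .E ⟨(i, j), _⟩, .P (n, k) => (-(kron i k)) • eP n.1 j + (kron j k) • eP n.1 i
  | .P (n, k), .E ⟨(i, j), _⟩ => -((-(kron i k)) • eP n.1 j + (kron j k) • eP n.1 i)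
  | .H, .P (n, i) => (-(n.1 : ℂ)) • eP (n.1 - 1) i
  | .P (n, i), .H => -((-(n.1 : ℂ)) • eP (n.1 - 1) i)
  | .D, .P (n, i) => ((N : ℂ) - 2 * n.1) • eP n.1 i
  | .P (n, i), .D => -(((N : ℂ) - 2 * n.1) • eP n.1 i)
  | .C, .P (n, i) => ((N : ℂ) - n.1) • eP (n.1 + 1) i
  | .P (n, i), .C => -(((N : ℂ) - n.1) • eP (n.1 + 1) i)
  | .P (m, i), .P (n, j) =>
      (kron i j * (if m.1 + n.1 = N then bcoef N m.1 else 0)) • eZ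
  | _, _ => 0

/-- bracket with a basis element, extended linearly -/
def ad (a : Bs d N) : gV d N →ₗ[ℂ] gV d N :=
  Finsupp.linearCombination ℂ (brkt a)

/-- the bilinear bracket -/
def Br : gV d N →ₗ[ℂ] gV d N →ₗ[ℂ] gV d N :=
  Finsupp.linearCombination ℂ ad

@[simp] lemma ad_single (a b : Bs d N) : ad a (single b 1) = brkt a b := by
  simp [ad]

@[simp] lemma Br_single (a : Bs d N) : Br (single a 1) = ad a := by
  simp [Br]


@[simp] lemma kron_self (i : Fin d) : kron i i = 1 := by simp [kron]

lemma kron_single (i k : Fin d) : kron i k = (Pi.single k (1:ℂ) : Fin d → ℂ) i := by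
  simp [kron, Pi.single_apply]

/-- antisymmetric elementary matrix -/
def Amat (i j : Fin d) : Matrix (Fin d) (Fin d) ℂ :=
  Matrix.single i j 1 - Matrix.single j i 1

lemma Amat_transpose (i j : Fin d) : (Amat i j)ᵀ = - Amat i j := by
  unfold Amat
  ext a b
  simp [Matrix.transpose_apply, Matrix.single, and_comm]

lemma std_mulVec (a b : Fin d) (v : Fin d → ℂ) :
    (Matrix.single a b (1:ℂ)) *ᵥ v = v b • (Pi.single a 1 : Fin d → ℂ) := by
  funext x
  simp [Matrix.mulVec, Matrix.single, dotProduct, ite_and,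
    Pi.single_apply, eq_comm, mul_comm]

/-- the linear map sending a matrix into the `so(d)` part -/
def lamL : Matrix (Fin d) (Fin d) ℂ →ₗ[ℂ] gV d N where
  toFun X := ∑ a : Fin d, ∑ b : Fin d, X a b • eM a b
  map_add' X Y := by simp [Matrix.add_apply, add_smul, Finset.sum_add_distrib]
  map_smul' c X := by simp [Matrix.smul_apply, smul_smul, Finset.smul_sum]

lemma lamL_apply (X : Matrix (Fin d) (Fin d) ℂ) :
    (lamL X : gV d N) = ∑ a : Fin d, ∑ b : Fin d, X a b • eM a b := rfl

lemma lamL_std (k r : Fin d) :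
    (lamL (Matrix.single k r (1:ℂ)) : gV d N) = eM k r := by
  rw [lamL_apply]
  rw [Finset.sum_eq_single k]
  · rw [Finset.sum_eq_single r]
    · simp [Matrix.single_apply_same]
    · intro b _ hb
      rw [Matrix.single_apply_of_ne, zero_smul]
      tauto
    · simp
  · intro a _ ha
    rw [Finset.sum_eq_zero]
    intro b _
    rw [Matrix.single_apply_of_ne, zero_smul]
    tauto
  · simp

lemma lamL_transpose (X : Matrix (Fin d) (Fin d) ℂ) :
    (lamL Xᵀ : gV d N) = - lamL X := by
  rw [lamL_apply, lamL_apply, Finset.sum_comm, ← Finset.sum_neg_distrib]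
  refine Finset.sum_congr rfl fun a _ => ?_
  rw [← Finset.sum_neg_distrib]
  refine Finset.sum_congr rfl fun b _ => ?_
  rw [Matrix.transpose_apply, eM_skew, smul_neg]

/-- the linear map sending a vector into the level-`n` translation part -/
def muL (n : ℕ) : (Fin d → ℂ) →ₗ[ℂ] gV d N where
  toFun v := ∑ i : Fin d, v i • eP n i
  map_add' v w := by simp [add_smul, Finset.sum_add_distrib]
  map_smul' c v := by simp [smul_smul, Finset.smul_sum]

lemma muL_apply (n : ℕ) (v : Fin d → ℂ) :
    (muL n v : gV d N) = ∑ i : Fin d, v i • eP n i := rfl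

lemma muL_single (n : ℕ) (k : Fin d) :
    (muL n (Pi.single k 1 : Fin d → ℂ) : gV d N) = eP n k := by
  rw [muL_apply, Finset.sum_eq_single k] <;> simp [Pi.single_apply]
  intro b hb; simp [hb]

lemma muL_gt {n : ℕ} (h : N < n) (v : Fin d → ℂ) : (muL n v : gV d N) = 0 := by
  rw [muL_apply, Finset.sum_eq_zero]
  intro i _
  rw [eP_of_gt h, smul_zero]


-- basic brkt reductions
lemma brkt_Mc_right (a : Bs d N) : brkt a .Mc = 0 := by
  rcases a with _ | _ | _ | _ | ⟨⟨⟨i, j⟩, h⟩⟩ | ⟨⟨n, i⟩⟩ <;> rfl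

lemma brkt_Mc_left (a : Bs d N) : brkt .Mc a = 0 := by
  rcases a with _ | _ | _ | _ | ⟨⟨⟨i, j⟩, h⟩⟩ | ⟨⟨n, i⟩⟩ <;> rfl

lemma ad_Mc (x : gV d N) : ad .Mc x = 0 := by
  have : (brkt .Mc : Bs d N → gV d N) = 0 := funext brkt_Mc_left
  rw [ad, this, Finsupp.linearCombination_zero, LinearMap.zero_apply]

@[simp] lemma ad_eZ (a : Bs d N) : ad a eZ = 0 := by
  rw [eZ, ad_single, brkt_Mc_right]

-- ad on sl2 generators
@[simp] lemma ad_H_eD : ad (.H : Bs d N) eD = -((2:ℂ) • eH) := by rw [eD, ad_single]; rfl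
@[simp] lemma ad_H_eC : ad (.H : Bs d N) eC = -eD := by rw [eC, ad_single]; rfl
@[simp] lemma ad_D_eH : ad (.D : Bs d N) eH = (2:ℂ) • eH := by rw [eH, ad_single]; rfl
@[simp] lemma ad_D_eC : ad (.D : Bs d N) eC = (-2:ℂ) • eC := by rw [eC, ad_single]; rfl
@[simp] lemma ad_C_eH : ad (.C : Bs d N) eH = eD := by rw [eH, ad_single]; rfl
@[simp] lemma ad_C_eD : ad (.C : Bs d N) eD = -((-2:ℂ) • eC) := by rw [eD, ad_single]; rfl
@[simp] lemma ad_H_eH : ad (.H : Bs d N) eH = 0 := by rw [eH, ad_single]; rfl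
@[simp] lemma ad_D_eD : ad (.D : Bs d N) eD = 0 := by rw [eD, ad_single]; rfl
@[simp] lemma ad_C_eC : ad (.C : Bs d N) eC = 0 := by rw [eC, ad_single]; rfl

lemma ad_E_eH (p) : ad (.E p : Bs d N) eH = 0 := by
  obtain ⟨⟨i, j⟩, h⟩ := p; rw [eH, ad_single]; rfl
lemma ad_E_eD (p) : ad (.E p : Bs d N) eD = 0 := by
  obtain ⟨⟨i, j⟩, h⟩ := p; rw [eD, ad_single]; rfl
lemma ad_E_eC (p) : ad (.E p : Bs d N) eC = 0 := by
  obtain ⟨⟨i, j⟩, h⟩ := p; rw [eC, ad_single]; rfl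

lemma ad_P_eH (q : Fin (N+1) × Fin d) :
    ad (.P q : Bs d N) eH = -((-(q.1.1 : ℂ)) • eP (q.1.1 - 1) q.2) := by
  obtain ⟨n, i⟩ := q; rw [eH, ad_single]; rfl
lemma ad_P_eD (q : Fin (N+1) × Fin d) :
    ad (.P q : Bs d N) eD = -(((N : ℂ) - 2 * q.1.1) • eP q.1.1 q.2) := by
  obtain ⟨n, i⟩ := q; rw [eD, ad_single]; rfl
lemma ad_P_eC (q : Fin (N+1) × Fin d) :
    ad (.P q : Bs d N) eC = -(((N : ℂ) - q.1.1) • eP (q.1.1 + 1) q.2) := by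
  obtain ⟨n, i⟩ := q; rw [eC, ad_single]; rfl

-- ad on eP
lemma ad_H_eP {n : ℕ} (hn : n ≤ N) (i : Fin d) :
    ad (.H : Bs d N) (eP n i) = (-(n : ℂ)) • eP (n - 1) i := by
  rw [eP_of_le hn, ad_single]; rfl

lemma ad_D_eP (n : ℕ) (i : Fin d) :
    ad (.D : Bs d N) (eP n i) = ((N : ℂ) - 2 * n) • eP n i := by
  rcases le_or_gt n N with hn | hn
  · conv_lhs => rw [eP_of_le hn, ad_single]
    rfl
  · rw [eP_of_gt hn]; simp

lemma ad_C_eP (n : ℕ) (i : Fin d) :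
    ad (.C : Bs d N) (eP n i) = ((N : ℂ) - n) • eP (n + 1) i := by
  rcases le_or_gt n N with hn | hn
  · rw [eP_of_le hn, ad_single]; rfl
  · rw [eP_of_gt hn, map_zero, eP_of_gt (show N < n + 1 by omega), smul_zero]

lemma ad_E_eP (p : {p : Fin d × Fin d // p.1 < p.2}) (n : ℕ) (k : Fin d) :
    ad (.E p : Bs d N) (eP n k) =
      (-(kron p.1.1 k)) • eP n p.1.2 + (kron p.1.2 k) • eP n p.1.1 := by
  obtain ⟨⟨i, j⟩, h⟩ := p
  rcases le_or_gt n N with hn | hn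
  · rw [eP_of_le hn, ad_single]; rfl
  · rw [eP_of_gt hn, map_zero, eP_of_gt hn, eP_of_gt hn, smul_zero, smul_zero, add_zero]

lemma ad_P_eP (q : Fin (N+1) × Fin d) (n : ℕ) (j : Fin d) :
    ad (.P q : Bs d N) (eP n j) =
      (kron q.2 j * (if q.1.1 + n = N then bcoef N q.1.1 else 0)) • eZ := by
  obtain ⟨m, i⟩ := q
  rcases le_or_gt n N with hn | hn
  · rw [eP_of_le hn, ad_single]; rfl
  · rw [eP_of_gt hn, map_zero, if_neg (by omega), mul_zero, zero_smul]

-- ad on eM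
lemma ad_H_eM (k r : Fin d) : ad (.H : Bs d N) (eM k r) = 0 := by
  rw [eM, map_sub]
  have : ∀ a b : Fin d, ad (.H : Bs d N) (em a b) = 0 := by
    intro a b
    rw [em]
    split
    · rw [ad_single]; rfl
    · rw [map_zero]
  rw [this, this, sub_zero]

lemma ad_D_eM (k r : Fin d) : ad (.D : Bs d N) (eM k r) = 0 := by
  rw [eM, map_sub]
  have : ∀ a b : Fin d, ad (.D : Bs d N) (em a b) = 0 := by
    intro a b
    rw [em]
    split
    · rw [ad_single]; rfl
    · rw [map_zero]
  rw [this, this, sub_zero]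

lemma ad_C_eM (k r : Fin d) : ad (.C : Bs d N) (eM k r) = 0 := by
  rw [eM, map_sub]
  have : ∀ a b : Fin d, ad (.C : Bs d N) (em a b) = 0 := by
    intro a b
    rw [em]
    split
    · rw [ad_single]; rfl
    · rw [map_zero]
  rw [this, this, sub_zero]

lemma ad_E_eM (p : {p : Fin d × Fin d // p.1 < p.2}) (k r : Fin d) :
    ad (.E p : Bs d N) (eM k r) =
      (-(kron p.1.1 k)) • eM p.1.2 r - (kron p.1.2 r) • eM p.1.1 k
        + (kron p.1.1 r) • eM p.1.2 k + (kron p.1.2 k) • eM p.1.1 r := by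
  obtain ⟨⟨i, j⟩, hij⟩ := p
  rcases lt_trichotomy k r with hkr | hkr | hkr
  · rw [eM_lt hkr, ad_single]; rfl
  · subst hkr
    rw [eM_self, map_zero]
    module
  · rw [eM_skew, map_neg, eM_lt hkr, ad_single]
    show -((-(kron i r)) • eM j k - (kron j k) • eM i r
        + (kron i k) • eM j r + (kron j r) • eM i k) = _
    module

lemma ad_P_eM (q : Fin (N+1) × Fin d) (k r : Fin d) :
    ad (.P q : Bs d N) (eM k r) =
      -((-(kron k q.2)) • eP q.1.1 r + (kron r q.2) • eP q.1.1 k) := by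
  obtain ⟨n, c⟩ := q
  rcases lt_trichotomy k r with hkr | hkr | hkr
  · rw [eM_lt hkr, ad_single]; rfl
  · subst hkr
    rw [eM_self, map_zero]
    module
  · rw [eM_skew, map_neg, eM_lt hkr, ad_single]
    show -(-((-(kron r c)) • eP (n:ℕ) k + (kron k c) • eP (n:ℕ) r)) = _
    module


-- ad composed with muL / lamL
lemma ad_H_mu {n : ℕ} (hn : n ≤ N) (v : Fin d → ℂ) :
    ad (.H : Bs d N) (muL n v) = (-(n : ℂ)) • muL (n - 1) v := by
  simp only [muL_apply, map_sum, Finset.smul_sum]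
  refine Finset.sum_congr rfl fun i _ => ?_
  rw [_root_.map_smul, ad_H_eP hn, smul_comm]

lemma ad_D_mu (n : ℕ) (v : Fin d → ℂ) :
    ad (.D : Bs d N) (muL n v) = ((N : ℂ) - 2 * n) • muL n v := by
  simp only [muL_apply, map_sum, Finset.smul_sum]
  refine Finset.sum_congr rfl fun i _ => ?_
  rw [_root_.map_smul, ad_D_eP, smul_comm]

lemma ad_C_mu (n : ℕ) (v : Fin d → ℂ) :
    ad (.C : Bs d N) (muL n v) = ((N : ℂ) - n) • muL (n + 1) v := by
  simp only [muL_apply, map_sum, Finset.smul_sum]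
  refine Finset.sum_congr rfl fun i _ => ?_
  rw [_root_.map_smul, ad_C_eP, smul_comm]

lemma std_mul_std (a b c e : Fin d) :
    Matrix.single a b (1:ℂ) * Matrix.single c e 1
      = if b = c then Matrix.single a e 1 else 0 := by
  rcases eq_or_ne b c with h | h
  · subst h
    rw [Matrix.single_mul_single_same, one_mul, if_pos rfl]
  · rw [Matrix.single_mul_single_of_ne (h := h), if_neg h]

lemma ad_E_mu (p : {p : Fin d × Fin d // p.1 < p.2}) (n : ℕ) (v : Fin d → ℂ) :
    ad (.E p : Bs d N) (muL n v) = muL n ((Amat p.1.1 p.1.2) *ᵥ v) := by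
  have key : (ad (.E p : Bs d N)).comp (muL n)
      = (muL n).comp (Matrix.mulVecLin (Amat p.1.1 p.1.2)) := by
    apply (Pi.basisFun ℂ (Fin d)).ext
    intro k
    rw [Pi.basisFun_apply]
    simp only [LinearMap.comp_apply, Matrix.mulVecLin_apply]
    rw [muL_single, ad_E_eP]
    simp only [Amat]
    rw [Matrix.sub_mulVec, std_mulVec, std_mulVec]
    rw [map_sub, _root_.map_smul, _root_.map_smul, muL_single, muL_single]
    rw [kron_single, kron_single]
    module
  exact congrFun (congrArg (fun f => f.toFun) key) v

lemma ad_P_mu (q : Fin (N+1) × Fin d) (n : ℕ) (v : Fin d → ℂ) :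
    ad (.P q : Bs d N) (muL n v) =
      (v q.2 * (if q.1.1 + n = N then bcoef N q.1.1 else 0)) • eZ := by
  rw [muL_apply, map_sum]
  rw [Finset.sum_eq_single q.2]
  · rw [_root_.map_smul, ad_P_eP, kron_self, one_mul, smul_smul]
  · intro b _ hb
    rw [_root_.map_smul, ad_P_eP, kron, if_neg (by exact fun h => hb h.symm), zero_mul,
      zero_smul, smul_zero]
  · simp

lemma ad_E_lam (p : {p : Fin d × Fin d // p.1 < p.2}) (X : Matrix (Fin d) (Fin d) ℂ) :
    ad (.E p : Bs d N) (lamL X)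
      = lamL (Amat p.1.1 p.1.2 * X - X * Amat p.1.1 p.1.2) := by
  obtain ⟨⟨i, j⟩, hij⟩ := p
  have hij' : i ≠ j := ne_of_lt hij
  have key : (ad (.E ⟨(i, j), hij⟩ : Bs d N)).comp lamL
      = lamL.comp (LinearMap.mulLeft ℂ (Amat i j) - LinearMap.mulRight ℂ (Amat i j)) := by
    apply (Matrix.stdBasis ℂ (Fin d) (Fin d)).ext
    rintro ⟨k, r⟩
    rw [Matrix.stdBasis_eq_single]
    simp only [LinearMap.comp_apply, LinearMap.sub_apply, LinearMap.mulLeft_apply,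
      LinearMap.mulRight_apply, map_sub]
    rw [lamL_std, ad_E_eM]
    dsimp only
    simp only [Amat, Matrix.sub_mul, Matrix.mul_sub, std_mul_std, map_sub]
    simp only [apply_ite lamL, map_zero, lamL_std, kron, eM]
    split_ifs <;> subst_vars <;>
      first
        | module
        | simp_all
        | (exfalso; simp_all)
  exact congrFun (congrArg (fun f => f.toFun) key) X

lemma ad_P_lam (q : Fin (N+1) × Fin d) (X : Matrix (Fin d) (Fin d) ℂ) :
    ad (.P q : Bs d N) (lamL X)
      = - muL (q.1 : ℕ) ((X - Xᵀ) *ᵥ (Pi.single q.2 1 : Fin d → ℂ)) := by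
  obtain ⟨n, c⟩ := q
  have hmv : ((X - Xᵀ) *ᵥ (Pi.single c 1 : Fin d → ℂ)) = fun x => X x c - X c x := by
    funext x
    simp [Matrix.mulVec, dotProduct, Matrix.sub_apply, Matrix.transpose_apply,
      Pi.single_apply, mul_ite, Finset.sum_ite_eq]
  rw [hmv]
  have hP : ∀ k r : Fin d, ad (.P (n, c) : Bs d N) (eM k r)
      = (kron k c) • eP (n : ℕ) r - (kron r c) • eP (n : ℕ) k := by
    intro k r
    rw [ad_P_eM]
    module
  rw [lamL_apply, map_sum, muL_apply]
  simp only [map_sum, _root_.map_smul, hP, smul_sub]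
  have hstep : ∀ a : Fin d,
      (∑ b : Fin d, (X a b • kron a c • eP (n : ℕ) b - X a b • kron b c • (eP (n : ℕ) a : gV d N)))
        = (if a = c then ∑ b : Fin d, X a b • eP (n : ℕ) b else 0) - X a c • eP (n : ℕ) a := by
    intro a
    rw [Finset.sum_sub_distrib]
    congr 1
    · split_ifs with h
      · refine Finset.sum_congr rfl fun b _ => ?_
        simp [kron, h]
      · rw [Finset.sum_eq_zero]
        intro b _
        simp [kron, h]
    · simp only [kron, smul_ite, smul_zero, smul_smul, mul_one, mul_zero, ite_smul, zero_smul]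
      rw [Finset.sum_ite_eq' Finset.univ c (fun b => X a b • eP (n : ℕ) a)]
      simp
  simp only [hstep]
  rw [Finset.sum_sub_distrib, Finset.sum_ite_eq' Finset.univ c]
  simp only [Finset.mem_univ, if_true]
  rw [← Finset.sum_neg_distrib, ← Finset.sum_sub_distrib]
  refine Finset.sum_congr rfl fun x _ => ?_
  module


lemma lamL_half (Y : Matrix (Fin d) (Fin d) ℂ) :
    (lamL Y : gV d N) = (2⁻¹ : ℂ) • lamL (Y - Yᵀ) := by
  rw [map_sub, lamL_transpose, sub_neg_eq_add, ← two_smul ℂ, smul_smul]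
  norm_num

lemma brkt_EE (p q : {p : Fin d × Fin d // p.1 < p.2}) :
    (brkt (.E p) (.E q) : gV d N)
      = lamL (Amat p.1.1 p.1.2 * Matrix.single q.1.1 q.1.2 1
          - Matrix.single q.1.1 q.1.2 1 * Amat p.1.1 p.1.2) := by
  obtain ⟨⟨k, r⟩, h⟩ := q
  rw [← ad_single, ← eM_lt h, ← lamL_std, ad_E_lam]

lemma comm_sub_transpose (A B : Matrix (Fin d) (Fin d) ℂ) (hA : Aᵀ = -A) :
    (A * B - B * A) - (A * B - B * A)ᵀ = A * (B - Bᵀ) - (B - Bᵀ) * A := by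
  rw [Matrix.transpose_sub, Matrix.transpose_mul, Matrix.transpose_mul, hA]
  noncomm_ring

lemma brkt_EE' (p q : {p : Fin d × Fin d // p.1 < p.2}) :
    (brkt (.E p) (.E q) : gV d N)
      = (2⁻¹ : ℂ) • lamL (Amat p.1.1 p.1.2 * Amat q.1.1 q.1.2
          - Amat q.1.1 q.1.2 * Amat p.1.1 p.1.2) := by
  rw [brkt_EE, lamL_half]
  congr 2
  rw [comm_sub_transpose _ _ (Amat_transpose _ _)]
  have hq : (Amat q.1.1 q.1.2 : Matrix (Fin d) (Fin d) ℂ)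
      = Matrix.single q.1.1 q.1.2 1 - (Matrix.single q.1.1 q.1.2 1)ᵀ := by
    rw [Amat]
    congr 1
    ext a b
    simp [Matrix.transpose_apply, Matrix.single, and_comm]
  rw [← hq]

lemma brkt_EP (p : {p : Fin d × Fin d // p.1 < p.2}) (q : Fin (N+1) × Fin d) :
    (brkt (.E p) (.P q) : gV d N)
      = muL (q.1 : ℕ) (Amat p.1.1 p.1.2 *ᵥ (Pi.single q.2 1 : Fin d → ℂ)) := by
  obtain ⟨⟨n, hn⟩, k⟩ := q
  rw [← ad_single]
  rw [show (Bs.P (⟨n, hn⟩, k) : Bs d N) = .P (⟨n, by omega⟩, k) from rfl]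
  rw [← eP_of_le (show n ≤ N by omega), ← muL_single, ad_E_mu]

set_option maxHeartbeats 1000000 in
lemma brkt_skew (hN : Odd N) (a b : Bs d N) : brkt a b = - brkt b a := by
  have hPP : ∀ (m n : Fin (N+1)) (i j : Fin d),
      (brkt (.P (m, i)) (.P (n, j)) : gV d N) = - brkt (.P (n, j)) (.P (m, i)) := by
    intro m n i j
    show (kron i j * (if (m:ℕ) + (n:ℕ) = N then bcoef N m else 0)) • eZ
      = -((kron j i * (if (n:ℕ) + (m:ℕ) = N then bcoef N n else 0)) • eZ)
    rcases eq_or_ne ((m:ℕ) + (n:ℕ)) N with h | h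
    · rw [if_pos h, if_pos (by omega), kron_comm j i]
      have hn : (n : ℕ) = N - (m : ℕ) := by omega
      have : bcoef N (n : ℕ) = - bcoef N (m : ℕ) := by
        rw [hn]
        have := bcoef_skew hN (show (m:ℕ) ≤ N by omega)
        rw [this]; ring
      rw [this]
      rw [← neg_smul]; ring_nf
    · rw [if_neg h, if_neg (by omega)]
      simp
  have hEE : ∀ p q, (brkt (.E p) (.E q) : gV d N) = - brkt (.E q) (.E p) := by
    intro p q
    rw [brkt_EE', brkt_EE', ← smul_neg, ← map_neg, neg_sub]
  rcases a with _ | _ | _ | _ | p | mp <;> rcases b with _ | _ | _ | _ | q | nq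
  case E.E => exact hEE p q
  case P.P =>
    obtain ⟨m, i⟩ := mp
    obtain ⟨n, j⟩ := nq
    exact hPP m n i j
  all_goals try obtain ⟨⟨k, r⟩, hp⟩ := p
  all_goals try obtain ⟨⟨k2, r2⟩, hq⟩ := q
  all_goals try obtain ⟨n, j⟩ := nq
  all_goals try obtain ⟨m, i⟩ := mp
  all_goals simp [brkt, neg_neg]


/-- cyclic Jacobi sum on basis elements -/
def Jac (a b c : Bs d N) : gV d N := ad a (brkt b c) + ad b (brkt c a) + ad c (brkt a b)

lemma jac_rot {a b c : Bs d N} (h : Jac a b c = 0) : Jac b c a = 0 := by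
  have : Jac b c a = Jac a b c := by unfold Jac; abel
  rw [this, h]

lemma half_zero {x : gV d N} (h : x = -x) : x = 0 := by
  have h2 : (2 : ℂ) • x = 0 := by
    rw [two_smul]
    nth_rewrite 2 [h]
    abel
  have := smul_eq_zero.mp h2
  simpa using this

lemma jac_swap (hN : Odd N) {a b c : Bs d N} (h : Jac a b c = 0) : Jac b a c = 0 := by
  have key : Jac b a c = - Jac a b c := by
    unfold Jac
    rw [brkt_skew hN a c, brkt_skew hN c b, brkt_skew hN b a]
    simp only [map_neg]
    abel
  rw [key, h, neg_zero]

lemma jac_self (hN : Odd N) (a c : Bs d N) : Jac a a c = 0 := by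
  unfold Jac
  rw [half_zero (brkt_skew hN a a), map_zero, brkt_skew hN c a, map_neg]
  abel

lemma jac_Mc (b c : Bs d N) : Jac .Mc b c = 0 := by
  unfold Jac
  rw [brkt_Mc_left, brkt_Mc_right, ad_Mc, map_zero, map_zero]
  simp

lemma ad_lam_zero (a : Bs d N) (h : ∀ k r : Fin d, ad a (eM k r : gV d N) = 0)
    (X : Matrix (Fin d) (Fin d) ℂ) : ad a (lamL X) = 0 := by
  rw [lamL_apply, map_sum]
  refine Finset.sum_eq_zero fun p _ => ?_
  rw [map_sum]
  refine Finset.sum_eq_zero fun q _ => ?_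
  rw [_root_.map_smul, h, smul_zero]

-- triples within {H, D, C}
lemma jHDC : (Jac .H .D .C : gV d N) = 0 := by
  simp only [Jac, brkt]
  simp only [map_neg, _root_.map_smul, ad_H_eC, ad_D_eD, ad_C_eH]
  module

-- sl2 pairs with one E
lemma jHDE (p) : (Jac .H .D (.E p) : gV d N) = 0 := by
  obtain ⟨⟨k, r⟩, h⟩ := p
  simp only [Jac, brkt]
  simp only [map_zero, map_neg, _root_.map_smul, ad_E_eH]
  simp

lemma jHCE (p) : (Jac .H .C (.E p) : gV d N) = 0 := by
  obtain ⟨⟨k, r⟩, h⟩ := p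
  simp only [Jac, brkt]
  simp only [map_zero, map_neg, _root_.map_smul, ad_E_eD]
  simp

lemma jDCE (p) : (Jac .D .C (.E p) : gV d N) = 0 := by
  obtain ⟨⟨k, r⟩, h⟩ := p
  simp only [Jac, brkt]
  simp only [map_zero, map_neg, _root_.map_smul, ad_E_eC]
  simp

-- sl2 pairs with one P
lemma jHDP (q : Fin (N+1) × Fin d) : (Jac .H .D (.P q) : gV d N) = 0 := by
  obtain ⟨n, i⟩ := q
  have hn : (n : ℕ) ≤ N := Nat.lt_succ_iff.mp n.isLt
  simp only [Jac, brkt]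
  simp only [map_neg, _root_.map_smul, ad_H_eP hn, ad_D_eP, ad_P_eH]
  rcases Nat.eq_zero_or_pos (n : ℕ) with h0 | h0
  · simp [h0]
  · rw [Nat.cast_pred h0]
    match_scalars <;> ring

lemma jHCP (q : Fin (N+1) × Fin d) : (Jac .H .C (.P q) : gV d N) = 0 := by
  obtain ⟨n, i⟩ := q
  have hn : (n : ℕ) ≤ N := Nat.lt_succ_iff.mp n.isLt
  simp only [Jac, brkt]
  rcases eq_or_lt_of_le hn with hNn | hNn
  · have hc : ((N : ℂ) - ((n : ℕ) : ℂ)) = 0 := by rw [hNn, sub_self]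
    rw [hc, zero_smul, map_zero]
    simp only [map_neg, _root_.map_smul, ad_C_eP, ad_P_eD]
    rcases Nat.eq_zero_or_pos (n : ℕ) with h0 | h0
    · have hN0 : N = 0 := by omega
      simp [h0, hN0]
    · rw [show (n : ℕ) - 1 + 1 = (n : ℕ) from by omega, Nat.cast_pred h0,
        show ((n : ℕ) : ℂ) = (N : ℂ) from by rw [hNn]]
      match_scalars <;> ring
  · simp only [map_neg, _root_.map_smul, ad_C_eP, ad_P_eD,
      ad_H_eP (show (n : ℕ) + 1 ≤ N from by omega)]
    rcases Nat.eq_zero_or_pos (n : ℕ) with h0 | h0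
    · simp only [h0]
      norm_num
    · rw [show (n : ℕ) + 1 - 1 = (n : ℕ) from by omega,
        show (n : ℕ) - 1 + 1 = (n : ℕ) from by omega, Nat.cast_pred h0]
      push_cast
      match_scalars <;> ring

lemma jDCP (q : Fin (N+1) × Fin d) : (Jac .D .C (.P q) : gV d N) = 0 := by
  obtain ⟨n, i⟩ := q
  simp only [Jac, brkt]
  simp only [map_neg, _root_.map_smul, ad_C_eP, ad_D_eP, ad_P_eC]
  push_cast
  match_scalars <;> ring

-- sl2 with two E's
lemma jHEE (p q) : (Jac .H (.E p) (.E q) : gV d N) = 0 := by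
  have hH := ad_lam_zero (.H : Bs d N) ad_H_eM
  unfold Jac
  rw [brkt_EE', _root_.map_smul, hH, smul_zero]
  have h1 : (brkt (.E q) .H : gV d N) = 0 := by
    obtain ⟨⟨k, r⟩, h⟩ := q; rfl
  have h2 : (brkt .H (.E p) : gV d N) = 0 := by
    obtain ⟨⟨k, r⟩, h⟩ := p; rfl
  rw [h1, h2, map_zero, map_zero]
  simp

lemma jDEE (p q) : (Jac .D (.E p) (.E q) : gV d N) = 0 := by
  have hH := ad_lam_zero (.D : Bs d N) ad_D_eM
  unfold Jac
  rw [brkt_EE', _root_.map_smul, hH, smul_zero]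
  have h1 : (brkt (.E q) .D : gV d N) = 0 := by
    obtain ⟨⟨k, r⟩, h⟩ := q; rfl
  have h2 : (brkt .D (.E p) : gV d N) = 0 := by
    obtain ⟨⟨k, r⟩, h⟩ := p; rfl
  rw [h1, h2, map_zero, map_zero]
  simp

lemma jCEE (p q) : (Jac .C (.E p) (.E q) : gV d N) = 0 := by
  have hH := ad_lam_zero (.C : Bs d N) ad_C_eM
  unfold Jac
  rw [brkt_EE', _root_.map_smul, hH, smul_zero]
  have h1 : (brkt (.E q) .C : gV d N) = 0 := by
    obtain ⟨⟨k, r⟩, h⟩ := q; rfl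
  have h2 : (brkt .C (.E p) : gV d N) = 0 := by
    obtain ⟨⟨k, r⟩, h⟩ := p; rfl
  rw [h1, h2, map_zero, map_zero]
  simp

-- helper : P-E bracket is minus E-P bracket
lemma brkt_PE (q : Fin (N+1) × Fin d) (p : {p : Fin d × Fin d // p.1 < p.2}) :
    (brkt (.P q) (.E p) : gV d N) = - brkt (.E p) (.P q) := by
  obtain ⟨n, k⟩ := q
  obtain ⟨⟨i, j⟩, h⟩ := p
  rfl

-- sl2 with E and P
lemma jHEP (p) (q : Fin (N+1) × Fin d) : (Jac .H (.E p) (.P q) : gV d N) = 0 := by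
  obtain ⟨n, k⟩ := q
  have hn : (n : ℕ) ≤ N := Nat.lt_succ_iff.mp n.isLt
  have h2 : (brkt .H (.E p) : gV d N) = 0 := by
    obtain ⟨⟨a, b⟩, h⟩ := p; rfl
  have h3 : (brkt (.P (n, k)) .H : gV d N) = -((-((n : ℕ) : ℂ)) • eP ((n : ℕ) - 1) k) := by
    rfl
  unfold Jac
  rw [brkt_EP, ad_H_mu hn, h2, map_zero, h3, map_neg, _root_.map_smul,
    ← muL_single, ad_E_mu]
  module

lemma jDEP (p) (q : Fin (N+1) × Fin d) : (Jac .D (.E p) (.P q) : gV d N) = 0 := by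
  obtain ⟨n, k⟩ := q
  have h2 : (brkt .D (.E p) : gV d N) = 0 := by
    obtain ⟨⟨a, b⟩, h⟩ := p; rfl
  have h3 : (brkt (.P (n, k)) .D : gV d N) = -((((N : ℂ)) - 2 * (n : ℕ)) • eP (n : ℕ) k) := by
    rfl
  unfold Jac
  rw [brkt_EP, ad_D_mu, h2, map_zero, h3, map_neg, _root_.map_smul,
    ← muL_single, ad_E_mu]
  module

lemma jCEP (p) (q : Fin (N+1) × Fin d) : (Jac .C (.E p) (.P q) : gV d N) = 0 := by
  obtain ⟨n, k⟩ := q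
  have h2 : (brkt .C (.E p) : gV d N) = 0 := by
    obtain ⟨⟨a, b⟩, h⟩ := p; rfl
  have h3 : (brkt (.P (n, k)) .C : gV d N) = -((((N : ℂ)) - (n : ℕ)) • eP ((n : ℕ) + 1) k) := by
    rfl
  unfold Jac
  rw [brkt_EP, ad_C_mu, h2, map_zero, h3, map_neg, _root_.map_smul,
    ← muL_single, ad_E_mu]
  module


-- sl2 with two P's
lemma jHPP (hN : Odd N) (q1 q2 : Fin (N+1) × Fin d) :
    (Jac .H (.P q1) (.P q2) : gV d N) = 0 := by
  obtain ⟨m, i⟩ := q1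
  obtain ⟨n, j⟩ := q2
  have hm : (m : ℕ) ≤ N := Nat.lt_succ_iff.mp m.isLt
  have hn : (n : ℕ) ≤ N := Nat.lt_succ_iff.mp n.isLt
  have hN1 : 1 ≤ N := hN.pos
  simp only [Jac, brkt]
  simp only [map_neg, _root_.map_smul, ad_eZ, smul_zero, neg_zero, zero_add, ad_P_eP]
  rcases Nat.eq_zero_or_pos (m : ℕ) with hm0 | hm0
  · rw [if_neg (show ¬((m:ℕ) + ((n:ℕ) - 1) = N) from by omega)]
    simp [hm0]
  · rcases Nat.eq_zero_or_pos (n : ℕ) with hn0 | hn0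
    · rw [if_neg (show ¬((n:ℕ) + ((m:ℕ) - 1) = N) from by omega)]
      simp [hn0]
    · rcases eq_or_ne ((m:ℕ) + (n:ℕ)) (N+1) with hc | hc
      · rw [if_pos (by omega), if_pos (by omega), kron_comm j i]
        have hb : bcoef N (n:ℕ) = - bcoef N ((m:ℕ) - 1) := by
          have h1 : (n:ℕ) = N - ((m:ℕ) - 1) := by omega
          have h2 := bcoef_skew hN (show (m:ℕ) - 1 ≤ N from by omega)
          rw [h1]
          linear_combination h2
        have hk := bcoef_C (show (m:ℕ) - 1 < N from by omega)
        rw [Nat.cast_pred hm0, show (m:ℕ) - 1 + 1 = (m:ℕ) from by omega,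
          show N - ((m:ℕ) - 1) = (n:ℕ) from by omega] at hk
        rw [hb]
        match_scalars
        linear_combination (kron i j) * hk
      · rw [if_neg (by omega), if_neg (by omega)]
        simp

lemma jDPP (hN : Odd N) (q1 q2 : Fin (N+1) × Fin d) :
    (Jac .D (.P q1) (.P q2) : gV d N) = 0 := by
  obtain ⟨m, i⟩ := q1
  obtain ⟨n, j⟩ := q2
  have hm : (m : ℕ) ≤ N := Nat.lt_succ_iff.mp m.isLt
  simp only [Jac, brkt]
  simp only [map_neg, _root_.map_smul, ad_eZ, smul_zero, neg_zero, zero_add, ad_P_eP]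
  rcases eq_or_ne ((m:ℕ) + (n:ℕ)) N with hc | hc
  · rw [if_pos hc, if_pos (by omega), kron_comm j i]
    have hb : bcoef N (n:ℕ) = - bcoef N (m:ℕ) := by
      have h1 : (n:ℕ) = N - (m:ℕ) := by omega
      have h2 := bcoef_skew hN hm
      rw [h1]
      linear_combination h2
    have hcast : (N : ℂ) = ((m:ℕ) : ℂ) + ((n:ℕ) : ℂ) := by
      rw [← Nat.cast_add, hc]
    rw [hb]
    match_scalars
    linear_combination (-2 * kron i j * bcoef N (m:ℕ)) * hcast
  · rw [if_neg hc, if_neg (by omega)]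
    simp

lemma jCPP (hN : Odd N) (q1 q2 : Fin (N+1) × Fin d) :
    (Jac .C (.P q1) (.P q2) : gV d N) = 0 := by
  obtain ⟨m, i⟩ := q1
  obtain ⟨n, j⟩ := q2
  have hm : (m : ℕ) ≤ N := Nat.lt_succ_iff.mp m.isLt
  simp only [Jac, brkt]
  simp only [map_neg, _root_.map_smul, ad_eZ, smul_zero, neg_zero, zero_add, ad_P_eP]
  rcases eq_or_ne ((m:ℕ) + (n:ℕ) + 1) N with hc | hc
  · rw [if_pos (by omega), if_pos (by omega), kron_comm j i]
    have hb : bcoef N (n:ℕ) = - bcoef N ((m:ℕ) + 1) := by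
      have h1 : (n:ℕ) = N - ((m:ℕ) + 1) := by omega
      have h2 := bcoef_skew hN (show (m:ℕ) + 1 ≤ N from by omega)
      rw [h1]
      linear_combination h2
    have hk := bcoef_C (show (m:ℕ) < N from by omega)
    rw [show N - (m:ℕ) = (n:ℕ) + 1 from by omega] at hk
    push_cast at hk
    have hcast : (N : ℂ) = ((m:ℕ) : ℂ) + ((n:ℕ) : ℂ) + 1 := by
      rw [show ((m:ℕ) : ℂ) + ((n:ℕ) : ℂ) + 1 = (((m:ℕ) + (n:ℕ) + 1 : ℕ) : ℂ) from by push_cast; ring, hc]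
    rw [hb]
    match_scalars
    linear_combination (-(kron i j)) * hk +
      (-(kron i j) * (bcoef N (m:ℕ) + bcoef N ((m:ℕ)+1))) * hcast
  · rw [if_neg (by omega), if_neg (by omega)]
    simp

lemma jPPP (q1 q2 q3 : Fin (N+1) × Fin d) :
    (Jac (.P q1) (.P q2) (.P q3) : gV d N) = 0 := by
  obtain ⟨m, i⟩ := q1
  obtain ⟨n, j⟩ := q2
  obtain ⟨l, k⟩ := q3
  simp only [Jac, brkt]
  simp only [_root_.map_smul, ad_eZ, smul_zero]
  simp

-- the so(d) triple
lemma jEEE (p q r : {p : Fin d × Fin d // p.1 < p.2}) :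
    (Jac (.E p) (.E q) (.E r) : gV d N) = 0 := by
  unfold Jac
  rw [brkt_EE' q r, brkt_EE' r p, brkt_EE' p q,
    _root_.map_smul, _root_.map_smul, _root_.map_smul,
    ad_E_lam, ad_E_lam, ad_E_lam]
  rw [← smul_add, ← smul_add, ← map_add, ← map_add]
  have hM : (Amat p.1.1 p.1.2 * (Amat q.1.1 q.1.2 * Amat r.1.1 r.1.2
        - Amat r.1.1 r.1.2 * Amat q.1.1 q.1.2)
      - (Amat q.1.1 q.1.2 * Amat r.1.1 r.1.2 - Amat r.1.1 r.1.2 * Amat q.1.1 q.1.2)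
        * Amat p.1.1 p.1.2)
      + (Amat q.1.1 q.1.2 * (Amat r.1.1 r.1.2 * Amat p.1.1 p.1.2
        - Amat p.1.1 p.1.2 * Amat r.1.1 r.1.2)
      - (Amat r.1.1 r.1.2 * Amat p.1.1 p.1.2 - Amat p.1.1 p.1.2 * Amat r.1.1 r.1.2)
        * Amat q.1.1 q.1.2)
      + (Amat r.1.1 r.1.2 * (Amat p.1.1 p.1.2 * Amat q.1.1 q.1.2
        - Amat q.1.1 q.1.2 * Amat p.1.1 p.1.2)
      - (Amat p.1.1 p.1.2 * Amat q.1.1 q.1.2 - Amat q.1.1 q.1.2 * Amat p.1.1 p.1.2)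
        * Amat r.1.1 r.1.2) = 0 := by
    noncomm_ring
  rw [hM, map_zero, smul_zero]

-- two E's and one P
lemma jEEP (p q : {p : Fin d × Fin d // p.1 < p.2}) (t : Fin (N+1) × Fin d) :
    (Jac (.E p) (.E q) (.P t) : gV d N) = 0 := by
  obtain ⟨n, k⟩ := t
  unfold Jac
  rw [brkt_EP, brkt_PE, brkt_EP, brkt_EE', ad_E_mu, map_neg, ad_E_mu,
    _root_.map_smul, ad_P_lam]
  have hY : (Amat p.1.1 p.1.2 * Amat q.1.1 q.1.2 - Amat q.1.1 q.1.2 * Amat p.1.1 p.1.2)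
      - (Amat p.1.1 p.1.2 * Amat q.1.1 q.1.2 - Amat q.1.1 q.1.2 * Amat p.1.1 p.1.2)ᵀ
      = (2 : ℂ) • (Amat p.1.1 p.1.2 * Amat q.1.1 q.1.2
          - Amat q.1.1 q.1.2 * Amat p.1.1 p.1.2) := by
    rw [Matrix.transpose_sub, Matrix.transpose_mul, Matrix.transpose_mul,
      Amat_transpose, Amat_transpose, two_smul]
    noncomm_ring
  rw [hY, Matrix.smul_mulVec, _root_.map_smul]
  simp only [Matrix.mulVec_mulVec, Matrix.sub_mulVec, map_sub]
  module

-- one E and two P's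
lemma jEPP (hN : Odd N) (p : {p : Fin d × Fin d // p.1 < p.2}) (q1 q2 : Fin (N+1) × Fin d) :
    (Jac (.E p) (.P q1) (.P q2) : gV d N) = 0 := by
  obtain ⟨m, i⟩ := q1
  obtain ⟨n, j⟩ := q2
  have hm : (m : ℕ) ≤ N := Nat.lt_succ_iff.mp m.isLt
  unfold Jac
  have h1 : (brkt (.P (m, i)) (.P (n, j)) : gV d N)
      = (kron i j * (if (m:ℕ) + (n:ℕ) = N then bcoef N (m:ℕ) else 0)) • eZ := rfl
  rw [h1, brkt_PE, brkt_EP, brkt_EP, map_neg, ad_P_mu, ad_P_mu,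
    _root_.map_smul, ad_eZ, smul_zero]
  have hskew : ∀ a b : Fin d, Amat p.1.1 p.1.2 a b = - Amat p.1.1 p.1.2 b a := by
    intro a b
    have := congrFun (congrFun (Amat_transpose p.1.1 p.1.2) b) a
    simpa [Matrix.transpose_apply] using this
  have hAv : (Amat p.1.1 p.1.2 *ᵥ (Pi.single i 1 : Fin d → ℂ)) j
      = -((Amat p.1.1 p.1.2 *ᵥ (Pi.single j 1 : Fin d → ℂ)) i) := by
    rw [Matrix.mulVec_single, Matrix.mulVec_single]
    simp only [MulOpposite.op_one, one_smul, Matrix.col_apply]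
    exact hskew j i
  dsimp only
  rcases eq_or_ne ((m:ℕ) + (n:ℕ)) N with hc | hc
  · rw [if_pos hc, if_pos (by omega)]
    have hb : bcoef N (n:ℕ) = - bcoef N (m:ℕ) := by
      have h2 := bcoef_skew hN hm
      rw [show (n:ℕ) = N - (m:ℕ) from by omega]
      linear_combination h2
    rw [hAv, hb]
    match_scalars
    ring
  · rw [if_neg hc, if_neg (by omega)]
    simp


lemma Br_single' (a : Bs d N) (s : ℂ) : Br (single a s) = s • ad a := by
  rw [Br, Finsupp.linearCombination_single]

lemma ad_single' (a b : Bs d N) (t : ℂ) : ad a (single b t) = t • brkt a b := by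
  rw [ad, Finsupp.linearCombination_single]

attribute [irreducible] Jac brkt

/-- Jacobi identity on all basis triples. -/
lemma jacP (hN : Odd N) : ∀ a b c : Bs d N, Jac a b c = 0 := by
  intro a b c
  cases a <;> cases b <;> cases c <;>
    solve_by_elim (maxDepth := 9)
      [jHDC, jHDE, jHCE, jDCE, jHDP, jHCP, jDCP, jHEE, jDEE, jCEE, jHEP, jDEP, jCEP,
       jHPP hN, jDPP hN, jCPP hN, jPPP, jEEE, jEEP, jEPP hN, jac_Mc, jac_self hN,
       jac_rot, jac_swap hN]

lemma Br_skew (hN : Odd N) (x y : gV d N) : Br x y = - Br y x := by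
  induction x using Finsupp.induction_linear with
  | zero => simp
  | add f g hf hg => simp only [map_add, LinearMap.add_apply, hf, hg]; abel
  | single a s =>
    induction y using Finsupp.induction_linear with
    | zero => simp
    | add f g hf hg => simp only [map_add, LinearMap.add_apply, hf, hg]; abel
    | single b t =>
      rw [Br_single', Br_single', LinearMap.smul_apply, LinearMap.smul_apply,
        ad_single', ad_single', brkt_skew hN a b]
      rw [smul_comm]
      simp

lemma Br_jac (hN : Odd N) (x y z : gV d N) :
    Br x (Br y z) + Br y (Br z x) + Br z (Br x y) = 0 := by
  induction x using Finsupp.induction_linear with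
  | zero => simp
  | add f g hf hg =>
    have h := congrArg₂ (· + ·) hf hg
    simp only [add_zero] at h
    simp only [map_add, LinearMap.add_apply]
    rw [← h]
    abel
  | single a s =>
    induction y using Finsupp.induction_linear with
    | zero => simp
    | add f g hf hg =>
      have h := congrArg₂ (· + ·) hf hg
      simp only [add_zero] at h
      simp only [map_add, LinearMap.add_apply]
      rw [← h]
      abel
    | single b t =>
      induction z using Finsupp.induction_linear with
      | zero => simp
      | add f g hf hg =>
        have h := congrArg₂ (· + ·) hf hg
        simp only [add_zero] at h
        simp only [map_add, LinearMap.add_apply]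
        rw [← h]
        abel
      | single c u =>
        have hJ := jacP hN a b c
        unfold Jac at hJ
        simp only [Br_single', ad_single', LinearMap.smul_apply, _root_.map_smul]
        trans ((s * t * u) • (ad a (brkt b c) + ad b (brkt c a) + ad c (brkt a b)))
        · module
        · rw [hJ, smul_zero]

/-- The Lie ring structure. -/
def theRing (hN : Odd N) : LieRing (gV d N) where
  bracket x y := Br x y
  add_lie x y z := by simp only [map_add, LinearMap.add_apply]
  lie_add x y z := by simp only [map_add]
  lie_self x := half_zero (Br_skew hN x x)
  leibniz_lie x y z := by
    show Br x (Br y z) = Br (Br x y) z + Br y (Br x z)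
    have hj := Br_jac hN x y z
    have h1 : Br (Br x y) z = - Br z (Br x y) := Br_skew hN _ _
    have h2 : Br y (Br x z) = - Br y (Br z x) := by
      rw [Br_skew hN x z, map_neg]
    rw [h1, h2, ← sub_eq_zero,
      show Br x (Br y z) - (-Br z (Br x y) + -Br y (Br z x))
        = Br x (Br y z) + Br y (Br z x) + Br z (Br x y) from by abel, hj]

/-- The Lie algebra structure. -/
def theLieAlg (hN : Odd N) : @LieAlgebra ℂ (gV d N) _ (theRing hN) :=
  letI := theRing (d := d) (N := N) hN
  { toModule := Finsupp.module _ _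
    lie_smul := fun t x y => by
      show Br x (t • y) = t • Br x y
      rw [_root_.map_smul] }


section Bracket
variable (hN : Odd N)

lemma Br_eM_eM (i j k r : Fin d) :
    Br (eM i j) (eM k r : gV d N)
      = (-(kron i k)) • eM j r - (kron j r) • eM i k
        + (kron i r) • eM j k + (kron j k) • eM i r := by
  rcases lt_trichotomy i j with h | h | h
  · rw [eM_lt h, Br_single]
    exact ad_E_eM ⟨(i, j), h⟩ k r
  · subst h
    rw [eM_self, map_zero, LinearMap.zero_apply]
    module
  · rw [eM_skew j i, map_neg, LinearMap.neg_apply, eM_lt h, Br_single]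
    rw [show ad (.E ⟨(j, i), h⟩ : Bs d N) (eM k r)
        = (-(kron j k)) • eM i r - (kron i r) • eM j k
          + (kron j r) • eM i k + (kron i k) • eM j r from ad_E_eM ⟨(j, i), h⟩ k r]
    module

lemma Br_eM_eP (i j : Fin d) (n : ℕ) (k : Fin d) :
    Br (eM i j) (eP n k : gV d N)
      = (-(kron i k)) • eP n j + (kron j k) • eP n i := by
  rcases lt_trichotomy i j with h | h | h
  · rw [eM_lt h, Br_single]
    exact ad_E_eP ⟨(i, j), h⟩ n k
  · subst h
    rw [eM_self, map_zero, LinearMap.zero_apply]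
    module
  · rw [eM_skew j i, map_neg, LinearMap.neg_apply, eM_lt h, Br_single]
    rw [show ad (.E ⟨(j, i), h⟩ : Bs d N) (eP n k)
        = (-(kron j k)) • eP n i + (kron i k) • eP n j from ad_E_eP ⟨(j, i), h⟩ n k]
    module

lemma Br_eP_eP (m n : ℕ) (i j : Fin d) :
    Br (eP m i) (eP n j : gV d N)
      = (kron i j * (if m + n = N then bcoef N m else 0)) • eZ := by
  rcases le_or_gt m N with hm | hm
  · rw [eP_of_le hm, Br_single]
    exact ad_P_eP (⟨m, by omega⟩, i) n j
  · rw [eP_of_gt hm, map_zero, LinearMap.zero_apply, if_neg (by omega), mul_zero, zero_smul]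

lemma Br_central (x : gV d N) : Br x eZ = 0 := by
  induction x using Finsupp.induction_linear with
  | zero => simp
  | add f g hf hg => simp [map_add, LinearMap.add_apply, hf, hg]
  | single a s => rw [Br_single', LinearMap.smul_apply, ad_eZ, smul_zero]

end Bracket

/-- enumeration of the basis -/
def bsEquiv : Bs d N ≃ (Fin 4 ⊕ {p : Fin d × Fin d // p.1 < p.2} ⊕ (Fin (N+1) × Fin d)) where
  toFun x := match x with
    | .H => .inl 0
    | .D => .inl 1
    | .C => .inl 2
    | .Mc => .inl 3
    | .E p => .inr (.inl p)
    | .P q => .inr (.inr q)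
  invFun x := match x with
    | .inl i => ![Bs.H, Bs.D, Bs.C, Bs.Mc] i
    | .inr (.inl p) => .E p
    | .inr (.inr q) => .P q
  left_inv := by rintro (_ | _ | _ | _ | p | q) <;> rfl
  right_inv := by
    rintro (i | p | q)
    · fin_cases i <;> rfl
    · rfl
    · rfl

/-- the strictly-upper-triangular index pairs -/
def ltEquiv : {p : Fin d × Fin d // p.1 < p.2} ≃ (Σ j : Fin d, Fin (j : ℕ)) where
  toFun x := ⟨x.1.2, ⟨(x.1.1 : ℕ), x.2⟩⟩
  invFun s := ⟨(⟨(s.2 : ℕ), lt_trans s.2.isLt s.1.isLt⟩, s.1), s.2.isLt⟩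
  left_inv := by rintro ⟨⟨a, b⟩, h⟩; rfl
  right_inv := by rintro ⟨a, b⟩; rfl

lemma card_lt : Fintype.card {p : Fin d × Fin d // p.1 < p.2} = d * (d - 1) / 2 := by
  rw [Fintype.card_congr ltEquiv, Fintype.card_sigma]
  simp only [Fintype.card_fin]
  rw [Fin.sum_univ_eq_sum_range (fun i => i) d, Finset.sum_range_id]

lemma card_Bs : Fintype.card (Bs d N) = d * (d - 1) / 2 + (N + 1) * d + 4 := by
  rw [Fintype.card_congr bsEquiv, Fintype.card_sum, Fintype.card_sum, Fintype.card_prod,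
    Fintype.card_fin, Fintype.card_fin, Fintype.card_fin, card_lt]
  omega

lemma dim_gV : Module.finrank ℂ (gV d N) = d * (d - 1) / 2 + (N + 1) * d + 4 := by
  rw [Module.finrank_finsupp_self, card_Bs]

lemma spans_gV :
    Submodule.span ℂ
      (({eH, eD, eC, eZ} : Set (gV d N)) ∪ {x | ∃ i j, x = eM i j}
        ∪ {x | ∃ n i, x = eP n i}) = ⊤ := by
  rw [eq_top_iff, ← (Finsupp.basisSingleOne (R := ℂ) (ι := Bs d N)).span_eq]
  refine Submodule.span_le.mpr ?_
  rintro x ⟨a, rfl⟩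
  refine Submodule.subset_span ?_
  rw [show (Finsupp.basisSingleOne (R := ℂ) (ι := Bs d N)) a = single a 1 from rfl]
  cases a with
  | H => exact Or.inl (Or.inl (by simp [eH]))
  | D => exact Or.inl (Or.inl (by simp [eD]))
  | C => exact Or.inl (Or.inl (by simp [eC]))
  | Mc => exact Or.inl (Or.inl (by simp [eZ]))
  | E p =>
    refine Or.inl (Or.inr ⟨p.1.1, p.1.2, ?_⟩)
    rw [eM_lt p.2]
  | P q =>
    refine Or.inr ⟨(q.1 : ℕ), q.2, ?_⟩
    rw [eP_of_le (Nat.lt_succ_iff.mp q.1.isLt)]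

/-- The bundled construction. -/
def theCGAHat (hN : Odd N) : CGAHatAlg d N :=
  letI ring : LieRing (gV d N) := theRing hN
  letI alg : LieAlgebra ℂ (gV d N) := theLieAlg hN
  { g := gV d N
    lieRing := ring
    lieAlg := alg
    H := eH
    D := eD
    C := eC
    M := eM
    P := eP
    Mc := eZ
    isHat :=
      { skewM := eM_skew
        bMM := fun i j k r => Br_eM_eM i j k r
        bDH := by show Br eD eH = _; rw [eD, Br_single, ad_D_eH]; rfl
        bCH := by show Br eC eH = _; rw [eC, Br_single, ad_C_eH]
        bDC := by show Br eD eC = _; rw [eD, Br_single, ad_D_eC]; rfl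
        bHM := fun i j => by show Br eH (eM i j) = 0; rw [eH, Br_single, ad_H_eM]
        bDM := fun i j => by show Br eD (eM i j) = 0; rw [eD, Br_single, ad_D_eM]
        bCM := fun i j => by show Br eC (eM i j) = 0; rw [eC, Br_single, ad_C_eM]
        bMP := fun i j k n => Br_eM_eP i j n k
        bHP := fun n hn i => by
          show Br eH (eP n i) = _
          rw [eH, Br_single, ad_H_eP hn]; rfl
        bDP := fun n hn i => by
          show Br eD (eP n i) = _
          rw [eD, Br_single, ad_D_eP]; rfl
        bCP := fun n hn i => by
          show Br eC (eP n i) = _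
          rw [eC, Br_single, ad_C_eP]; rfl
        bPP := fun m n i j => Br_eP_eP m n i j
        central := fun x => Br_central x
        Pbound := fun n hn i => eP_of_gt hn i
        spans := spans_gV
        dim := dim_gV } }

end CGAC

/-- For `ℓ ∈ 1/2 + ℕ₀` (i.e. `N = 2ℓ` odd), `b_m = -b_{2ℓ-m}` (so the modified
bracket is antisymmetric), and the modified bracket together with the central
element defines a Lie algebra structure on `cga_ℓ(d,ℂ) ⊕ ℂM`, i.e. the Jacobi
identity holds and the mass central extension exists. -/
theorem stmt3 (d N : ℕ) (hd : 1 ≤ d) (hN : Odd N) :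
    (∀ m ≤ N, bcoef N m = - bcoef N (N - m)) ∧
    Nonempty (CGAHatAlg d N) := by
  constructor
  · intro m hm
    exact CGAC.bcoef_skew hN hm
  · exact ⟨CGAC.theCGAHat hN⟩
end
end

section
/- Let φ be an s-invariant 2-cochain on V with values in cga_ℓ(d,ℂ). Then for all indices, φ(P_{i,j}, P_{r,t}) is an eigenvector of ad_D with eigenvalue 2(2ℓ - i - r); in particular if ℓ ∈ 1/2 + ℕ₀ and i + r ≠ 2ℓ ∓ 1, 2ℓ, then φ(P_{i,j}, P_{r,t}) lies in the span of V-components of the corresponding eigenspace, and when the eigenvalue 2(2ℓ-i-r) is not an eigenvalue of ad_D on g, φ(P_{i,j}, P_{r,t}) = 0. -/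
noncomputable section

/-- The underlying set of the Levi subalgebra `s = sl(2,ℂ) ⊕ so(d,ℂ)` generators. -/
def sSet {d : ℕ} {g : Type*} [LieRing g] [LieAlgebra ℂ g]
    (H D C : g) (M : Fin d → Fin d → g) : Set g :=
  {x | x = H ∨ x = D ∨ x = C ∨ ∃ i j, x = M i j}

/-- `D`-weight analysis of `s`-invariant `2`-cochains on `V` with values in
`cga_ℓ(d,ℂ)`: `φ(P_{n,i},P_{m,j})` is an `ad_D`-eigenvector of eigenvalue
`2(2ℓ-n-m)`; for `ℓ ∈ 1/2+ℕ₀` and `n+m ∉ {2ℓ-1, 2ℓ, 2ℓ+1}` the value lies in `V`,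
and whenever `2(2ℓ-n-m)` is not an eigenvalue of `ad_D` on `g` the value vanishes.
Here `N = 2ℓ`. -/
theorem stmt8 (d N : ℕ) (hd : 3 ≤ d) {g : Type*} [LieRing g] [LieAlgebra ℂ g]
    (H D C : g) (M : Fin d → Fin d → g) (P : ℕ → Fin d → g)
    (hg : IsCGA d N H D C M P)
    (φ : g → g → g)
    (haddl : ∀ a b c, φ (a + b) c = φ a c + φ b c)
    (hsmull : ∀ (t : ℂ) (a b), φ (t • a) b = t • φ a b)
    (hskew : ∀ a b, φ b a = - φ a b)
    (hinv : ∀ x ∈ sSet H D C M, ∀ a ∈ VSpan N P, ∀ b ∈ VSpan N P,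
      ⁅x, φ a b⁆ = φ ⁅x, a⁆ b + φ a ⁅x, b⁆) :
    (∀ n ≤ N, ∀ m ≤ N, ∀ i j,
      ⁅D, φ (P n i) (P m j)⁆ = ((2 : ℂ) * ((N : ℂ) - n - m)) • φ (P n i) (P m j)) ∧
    (Odd N → ∀ n ≤ N, ∀ m ≤ N, ∀ i j,
      n + m ≠ N - 1 → n + m ≠ N → n + m ≠ N + 1 →
      φ (P n i) (P m j) ∈ VSpan N P) ∧
    (∀ n ≤ N, ∀ m ≤ N, ∀ i j,
      (∀ x : g, ⁅D, x⁆ = ((2 : ℂ) * ((N : ℂ) - n - m)) • x → x = 0) →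
      φ (P n i) (P m j) = 0) := by
  classical
  have hDs : D ∈ sSet H D C M := Or.inr (Or.inl rfl)
  have hPV : ∀ n ≤ N, ∀ i, P n i ∈ VSpan N P := fun n hn i =>
    Submodule.subset_span ⟨n, hn, i, rfl⟩
  have hsmulr : ∀ (t : ℂ) (a b), φ a (t • b) = t • φ a b := by
    intro t a b
    rw [← neg_neg (φ a (t • b)), ← hskew, hsmull, hskew, smul_neg, neg_neg]
  have part1 : ∀ n ≤ N, ∀ m ≤ N, ∀ i j,
      ⁅D, φ (P n i) (P m j)⁆ = ((2 : ℂ) * ((N : ℂ) - n - m)) • φ (P n i) (P m j) := by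
    intro n hn m hm i j
    rw [hinv D hDs _ (hPV n hn i) _ (hPV m hm j), hg.bDP n hn i, hg.bDP m hm j,
      hsmull, hsmulr, ← add_smul]
    congr 1
    ring
  -- the operator T = (ad D)^3 - 4 (ad D) maps everything into V
  set A : g →ₗ[ℂ] g :=
    { toFun := fun w => ⁅D, w⁆
      map_add' := fun a b => lie_add D a b
      map_smul' := fun t a => lie_smul t D a } with hA
  set T : g →ₗ[ℂ] g := A ∘ₗ A ∘ₗ A - (4 : ℂ) • A with hT
  have hTval : ∀ w : g, T w = ⁅D, ⁅D, ⁅D, w⁆⁆⁆ - (4 : ℂ) • ⁅D, w⁆ := fun w => rfl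
  have key : ∀ w : g, T w ∈ VSpan N P := by
    have hle : Submodule.span ℂ
        (({H, D, C} : Set g) ∪ {x | ∃ i j, x = M i j} ∪ {x | ∃ n i, x = P n i}) ≤
        (VSpan N P).comap T := by
      rw [Submodule.span_le]
      intro x hx
      simp only [Set.mem_union, Set.mem_insert_iff, Set.mem_singleton_iff,
        Set.mem_setOf_eq] at hx
      obtain ((rfl | rfl | rfl) | ⟨i, j, rfl⟩) | ⟨n, i, rfl⟩ := hx <;>
        simp only [SetLike.mem_coe, Submodule.mem_comap, hTval]
      · simp only [hg.bDH, lie_smul, smul_smul]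
        rw [← sub_smul]
        norm_num
      · simp
      · simp only [hg.bDC, lie_smul, smul_smul]
        rw [← sub_smul]
        norm_num
      · simp [hg.bDM]
      · by_cases hn : n ≤ N
        · simp only [hg.bDP n hn, lie_smul, smul_smul]
          rw [← sub_smul]
          exact (VSpan N P).smul_mem _ (hPV n hn i)
        · rw [hg.Pbound n (not_le.mp hn) i]; simp
    intro w
    have : w ∈ (VSpan N P).comap T := hle (hg.spans ▸ Submodule.mem_top)
    exact this
  refine ⟨part1, ?_, ?_⟩
  · intro _ n hn m hm i j h1 h2 h3
    set v := φ (P n i) (P m j) with hv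
    set lam : ℂ := (2 : ℂ) * ((N : ℂ) - n - m) with hlam
    have hDv : ⁅D, v⁆ = lam • v := part1 n hn m hm i j
    have hTv : T v = (lam ^ 3 - 4 * lam) • v := by
      rw [hTval]
      simp only [hDv, lie_smul, smul_smul]
      rw [← sub_smul]
      ring_nf
    have hk : (N : ℂ) - n - m ≠ 0 ∧ (N : ℂ) - n - m ≠ 1 ∧ (N : ℂ) - n - m ≠ -1 := by
      refine ⟨?_, ?_, ?_⟩ <;> intro h
      · apply h2
        have : (N : ℂ) = ((n + m : ℕ) : ℂ) := by push_cast; linear_combination h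
        exact (Nat.cast_injective this).symm
      · apply h1
        have : (N : ℂ) = ((n + m + 1 : ℕ) : ℂ) := by push_cast; linear_combination h
        have hN : N = n + m + 1 := Nat.cast_injective this
        omega
      · apply h3
        have : ((N + 1 : ℕ) : ℂ) = ((n + m : ℕ) : ℂ) := by push_cast; linear_combination h
        exact (Nat.cast_injective this).symm
    have hne : lam ^ 3 - 4 * lam ≠ 0 := by
      have : lam ^ 3 - 4 * lam = lam * (lam - 2) * (lam + 2) := by ring
      rw [this]
      refine mul_ne_zero (mul_ne_zero ?_ ?_) ?_
      · simp only [hlam]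
        exact mul_ne_zero two_ne_zero hk.1
      · simp only [hlam]
        intro h
        exact hk.2.1 (by linear_combination h / 2)
      · simp only [hlam]
        intro h
        exact hk.2.2 (by linear_combination h / 2)
    have : (lam ^ 3 - 4 * lam) • v ∈ VSpan N P := hTv ▸ key v
    have := (VSpan N P).smul_mem (lam ^ 3 - 4 * lam)⁻¹ this
    rwa [smul_smul, inv_mul_cancel₀ hne, one_smul] at this
  · intro n hn m hm i j hx
    exact hx _ (part1 n hn m hm i j)
end
end

section
/- Neither cga_ℓ(2,ℂ) nor its mass central extension ĉga_ℓ(2,ℂ) is a perfect Lie algebra: the rotation generator M_{1,2} is not contained in the derived subalgebra [g,g]. In contrast, for d ≥ 3 the algebra cga_ℓ(d,ℂ) is perfect, i.e., [g,g] = g. -/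
noncomputable section

section AuxCGA

lemma kron_self' {d : ℕ} (i : Fin d) : kron i i = 1 := if_pos rfl
lemma kron_ne' {d : ℕ} {i j : Fin d} (h : i ≠ j) : kron i j = 0 := if_neg h

variable {g : Type} [LieRing g] [LieAlgebra ℂ g]

lemma self_neg_zero {x : g} (h : x = -x) : x = 0 := by
  have h2 : (2 : ℂ) • x = 0 := by rw [two_smul]; nth_rewrite 1 [h]; abel
  simpa using h2

lemma mm_two (M : Fin 2 → Fin 2 → g) (skewM : ∀ i j, M j i = -M i j)
    (bMM : ∀ i j k r, ⁅M i j, M k r⁆ =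
      (-(kron i k)) • M j r - (kron j r) • M i k + (kron i r) • M j k + (kron j k) • M i r) :
    ∀ i j k r, ⁅M i j, M k r⁆ = 0 := by
  have diag : ∀ i, M i i = 0 := fun i => self_neg_zero (skewM i i)
  have m10 : M 1 0 = - M 0 1 := skewM 0 1
  intro i j k r
  rw [bMM]
  fin_cases i <;> fin_cases j <;> fin_cases k <;> fin_cases r <;>
    simp [kron, diag, m10]

lemma bracket_mem_W (N : ℕ) (H D C : g) (M : Fin 2 → Fin 2 → g) (P : ℕ → Fin 2 → g) (Mc : g)
    (skewM : ∀ i j, M j i = - M i j)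
    (bMM : ∀ i j k r, ⁅M i j, M k r⁆ =
      (-(kron i k)) • M j r - (kron j r) • M i k + (kron i r) • M j k + (kron j k) • M i r)
    (bDH : ⁅D, H⁆ = (2 : ℂ) • H)
    (bCH : ⁅C, H⁆ = D)
    (bDC : ⁅D, C⁆ = (-2 : ℂ) • C)
    (bHM : ∀ i j, ⁅H, M i j⁆ = 0)
    (bDM : ∀ i j, ⁅D, M i j⁆ = 0)
    (bCM : ∀ i j, ⁅C, M i j⁆ = 0)
    (bMP : ∀ i j k, ∀ n : ℕ, ⁅M i j, P n k⁆ = (-(kron i k)) • P n j + (kron j k) • P n i)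
    (bHP : ∀ n ≤ N, ∀ i, ⁅H, P n i⁆ = (-(n : ℂ)) • P (n - 1) i)
    (bDP : ∀ n ≤ N, ∀ i, ⁅D, P n i⁆ = ((N : ℂ) - 2 * n) • P n i)
    (bCP : ∀ n ≤ N, ∀ i, ⁅C, P n i⁆ = ((N : ℂ) - n) • P (n + 1) i)
    (bPP : ∀ m n : ℕ, ∀ i j, ⁅P m i, P n j⁆ ∈ Submodule.span ℂ ({Mc} : Set g))
    (central : ∀ x : g, ⁅x, Mc⁆ = 0)
    (Pbound : ∀ n : ℕ, N < n → ∀ i, P n i = 0)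
    (spans : (⊤ : Submodule ℂ g) ≤ Submodule.span ℂ
      ((({H, D, C, Mc} : Set g) ∪ {x | ∃ i j, x = M i j}) ∪ {x | ∃ n i, x = P n i})) :
    ∀ x y : g, ⁅x, y⁆ ∈
      Submodule.span ℂ (({H, D, C, Mc} : Set g) ∪ {x | ∃ n i, x = P n i}) := by
  set W := Submodule.span ℂ (({H, D, C, Mc} : Set g) ∪ {x | ∃ n i, x = P n i}) with hWdef
  set S := (({H, D, C, Mc} : Set g) ∪ {x | ∃ i j, x = M i j}) ∪ {x | ∃ n i, x = P n i} with hSdef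
  have memH : H ∈ W := Submodule.subset_span (Or.inl (by simp))
  have memD : D ∈ W := Submodule.subset_span (Or.inl (by simp))
  have memC : C ∈ W := Submodule.subset_span (Or.inl (by simp))
  have memMc : Mc ∈ W := Submodule.subset_span (Or.inl (by simp))
  have memP : ∀ n i, P n i ∈ W := fun n i => Submodule.subset_span (Or.inr ⟨n, i, rfl⟩)
  have mcle : Submodule.span ℂ ({Mc} : Set g) ≤ W :=
    Submodule.span_le.mpr (by intro x hx; rw [Set.mem_singleton_iff] at hx; subst hx; exact memMc)
  have hHP : ∀ n i, ⁅H, P n i⁆ ∈ W := by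
    intro n i
    rcases le_or_gt n N with h | h
    · rw [bHP n h]; exact W.smul_mem _ (memP _ _)
    · rw [Pbound n h, lie_zero]; exact W.zero_mem
  have hDP : ∀ n i, ⁅D, P n i⁆ ∈ W := by
    intro n i
    rcases le_or_gt n N with h | h
    · rw [bDP n h]; exact W.smul_mem _ (memP _ _)
    · rw [Pbound n h, lie_zero]; exact W.zero_mem
  have hCP : ∀ n i, ⁅C, P n i⁆ ∈ W := by
    intro n i
    rcases le_or_gt n N with h | h
    · rw [bCP n h]; exact W.smul_mem _ (memP _ _)
    · rw [Pbound n h, lie_zero]; exact W.zero_mem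
  have hMP : ∀ i j n k, ⁅M i j, P n k⁆ ∈ W := by
    intro i j n k
    rw [bMP]
    exact W.add_mem (W.smul_mem _ (memP _ _)) (W.smul_mem _ (memP _ _))
  have hMM := mm_two M skewM bMM
  have genPairs : ∀ a ∈ S, ∀ b ∈ S, ⁅a, b⁆ ∈ W := by
    rintro a ha b hb
    rcases hb with (hb | ⟨i, j, rfl⟩) | ⟨n, i, rfl⟩
    · rcases ha with (ha | ⟨k, r, rfl⟩) | ⟨m, s, rfl⟩
      · simp only [Set.mem_insert_iff, Set.mem_singleton_iff] at ha hb
        rcases ha with rfl | rfl | rfl | rfl <;> rcases hb with rfl | rfl | rfl | rfl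
        · simpa using W.zero_mem
        · rw [← lie_skew, bDH]; exact W.neg_mem (W.smul_mem _ memH)
        · rw [← lie_skew, bCH]; exact W.neg_mem memD
        · rw [central]; exact W.zero_mem
        · rw [bDH]; exact W.smul_mem _ memH
        · simpa using W.zero_mem
        · rw [bDC]; exact W.smul_mem _ memC
        · rw [central]; exact W.zero_mem
        · rw [bCH]; exact memD
        · rw [← lie_skew, bDC]; exact W.neg_mem (W.smul_mem _ memC)
        · simpa using W.zero_mem
        · rw [central]; exact W.zero_mem
        · rw [← lie_skew, central]; simpa using W.zero_mem
        · rw [← lie_skew, central]; simpa using W.zero_mem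
        · rw [← lie_skew, central]; simpa using W.zero_mem
        · simpa using W.zero_mem
      · simp only [Set.mem_insert_iff, Set.mem_singleton_iff] at hb
        rcases hb with rfl | rfl | rfl | rfl
        · rw [← lie_skew, bHM]; simpa using W.zero_mem
        · rw [← lie_skew, bDM]; simpa using W.zero_mem
        · rw [← lie_skew, bCM]; simpa using W.zero_mem
        · rw [central]; exact W.zero_mem
      · simp only [Set.mem_insert_iff, Set.mem_singleton_iff] at hb
        rcases hb with rfl | rfl | rfl | rfl
        · rw [← lie_skew]; exact W.neg_mem (hHP _ _)
        · rw [← lie_skew]; exact W.neg_mem (hDP _ _)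
        · rw [← lie_skew]; exact W.neg_mem (hCP _ _)
        · rw [central]; exact W.zero_mem
    · rcases ha with (ha | ⟨k, r, rfl⟩) | ⟨m, s, rfl⟩
      · simp only [Set.mem_insert_iff, Set.mem_singleton_iff] at ha
        rcases ha with rfl | rfl | rfl | rfl
        · rw [bHM]; exact W.zero_mem
        · rw [bDM]; exact W.zero_mem
        · rw [bCM]; exact W.zero_mem
        · rw [← lie_skew, central]; simpa using W.zero_mem
      · rw [hMM]; exact W.zero_mem
      · rw [← lie_skew]; exact W.neg_mem (hMP _ _ _ _)
    · rcases ha with (ha | ⟨k, r, rfl⟩) | ⟨m, s, rfl⟩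
      · simp only [Set.mem_insert_iff, Set.mem_singleton_iff] at ha
        rcases ha with rfl | rfl | rfl | rfl
        · exact hHP _ _
        · exact hDP _ _
        · exact hCP _ _
        · rw [← lie_skew, central]; simpa using W.zero_mem
      · exact hMP _ _ _ _
      · exact mcle (bPP _ _ _ _)
  have step2 : ∀ b ∈ S, ∀ x : g, ⁅x, b⁆ ∈ W := by
    intro b hb x
    have hx : x ∈ Submodule.span ℂ S := spans Submodule.mem_top
    refine Submodule.span_induction (p := fun x _ => ⁅x, b⁆ ∈ W) ?_ ?_ ?_ ?_ hx
    · intro a ha; exact genPairs a ha b hb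
    · simpa using W.zero_mem
    · intro y z _ _ hy hz; rw [add_lie]; exact W.add_mem hy hz
    · intro t y _ hy; rw [smul_lie]; exact W.smul_mem t hy
  intro x y
  have hy : y ∈ Submodule.span ℂ S := spans Submodule.mem_top
  refine Submodule.span_induction (p := fun y _ => ⁅x, y⁆ ∈ W) ?_ ?_ ?_ ?_ hy
  · intro b hb; exact step2 b hb x
  · simpa using W.zero_mem
  · intro y z _ _ hy hz; rw [lie_add]; exact W.add_mem hy hz
  · intro t y _ hy; rw [lie_smul]; exact W.smul_mem t hy

end AuxCGA

/-- Neither `cga_ℓ(2,ℂ)` nor its mass central extension `ĉga_ℓ(2,ℂ)` is perfect: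
the rotation generator `M_{1,2}` is not in the derived subalgebra; in contrast,
for `d ≥ 3` the algebra `cga_ℓ(d,ℂ)` is perfect, `[g,g] = g`. -/
theorem stmt19 (N : ℕ) :
    (∀ (g : Type) [LieRing g] [LieAlgebra ℂ g]
        (H D C : g) (M : Fin 2 → Fin 2 → g) (P : ℕ → Fin 2 → g),
      IsCGA 2 N H D C M P →
        M 0 1 ∉ (⁅(⊤ : LieIdeal ℂ g), (⊤ : LieIdeal ℂ g)⁆ : LieIdeal ℂ g)) ∧
    (∀ (g : Type) [LieRing g] [LieAlgebra ℂ g]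
        (H D C : g) (M : Fin 2 → Fin 2 → g) (P : ℕ → Fin 2 → g) (Mc : g),
      Odd N → IsCGAHat 2 N H D C M P Mc →
        M 0 1 ∉ (⁅(⊤ : LieIdeal ℂ g), (⊤ : LieIdeal ℂ g)⁆ : LieIdeal ℂ g)) ∧
    (∀ (d : ℕ), 3 ≤ d → ∀ (g : Type) [LieRing g] [LieAlgebra ℂ g]
        (H D C : g) (M : Fin d → Fin d → g) (P : ℕ → Fin d → g),
      IsCGA d N H D C M P →
        (⁅(⊤ : LieIdeal ℂ g), (⊤ : LieIdeal ℂ g)⁆ : LieIdeal ℂ g) = ⊤) := by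
  refine ⟨?_, ?_, ?_⟩
  · -- cga_ℓ(2,ℂ) is not perfect
    intro g _ _ H D C M P hc hmem
    have diag : ∀ i, M i i = 0 := fun i => self_neg_zero (hc.skewM i i)
    have key := bracket_mem_W N H D C M P (0 : g) hc.skewM hc.bMM hc.bDH hc.bCH hc.bDC
      hc.bHM hc.bDM hc.bCM hc.bMP hc.bHP hc.bDP hc.bCP
      (fun m n i j => by rw [hc.bPP]; exact Submodule.zero_mem _)
      (fun x => lie_zero x) hc.Pbound
      (by
        rw [← hc.spans]
        refine Submodule.span_mono ?_
        refine Set.union_subset_union_left _ (Set.union_subset_union_left _ ?_)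
        intro x hx
        simp only [Set.mem_insert_iff, Set.mem_singleton_iff] at hx ⊢
        tauto)
    set T := (({H, D, C, (0:g)} : Set g) ∪ {x | ∃ n i, x = P n i}) with hT
    have hW : M 0 1 ∈ Submodule.span ℂ T := by
      let WI : LieIdeal ℂ g := { Submodule.span ℂ T with lie_mem := fun {x m} _ => key x m }
      have hle : (⁅(⊤ : LieIdeal ℂ g), (⊤ : LieIdeal ℂ g)⁆ : LieIdeal ℂ g) ≤ WI := by
        rw [LieSubmodule.lieIdeal_oper_eq_span, LieSubmodule.lieSpan_le]
        rintro z ⟨x, y, rfl⟩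
        exact key x y
      exact hle hmem
    have hWtop : Submodule.span ℂ T = ⊤ := by
      rw [eq_top_iff, ← hc.spans]
      refine Submodule.span_le.mpr ?_
      rintro x ((hx | ⟨i, j, rfl⟩) | ⟨n, i, rfl⟩)
      · apply Submodule.subset_span
        left
        simp only [Set.mem_insert_iff, Set.mem_singleton_iff] at hx ⊢
        tauto
      · fin_cases i <;> fin_cases j <;> simp only []
        · rw [diag]; exact zero_mem _
        · exact hW
        · show M 1 0 ∈ _
          rw [hc.skewM 0 1]; exact neg_mem hW
        · rw [diag]; exact zero_mem _
      · exact Submodule.subset_span (Or.inr ⟨n, i, rfl⟩)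
    let f : Fin 3 ⊕ (Fin (N+1) × Fin 2) → g := Sum.elim ![H, D, C] fun p => P p.1 p.2
    have hrange : Submodule.span ℂ (Set.range f) = ⊤ := by
      rw [eq_top_iff, ← hWtop]
      refine Submodule.span_le.mpr ?_
      rintro x (hx | ⟨n, i, rfl⟩)
      · simp only [Set.mem_insert_iff, Set.mem_singleton_iff] at hx
        rcases hx with rfl | rfl | rfl | rfl
        · exact Submodule.subset_span ⟨Sum.inl 0, rfl⟩
        · exact Submodule.subset_span ⟨Sum.inl 1, rfl⟩
        · exact Submodule.subset_span ⟨Sum.inl 2, rfl⟩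
        · exact zero_mem _
      · rcases le_or_gt n N with h | h
        · exact Submodule.subset_span ⟨Sum.inr (⟨n, by omega⟩, i), rfl⟩
        · rw [hc.Pbound n h]; exact zero_mem _
    have hcard := finrank_le_of_span_eq_top hrange
    rw [hc.dim] at hcard
    simp [Fintype.card_sum, Fintype.card_prod, Fintype.card_fin] at hcard
    omega
  · -- the mass central extension of cga_ℓ(2,ℂ) is not perfect
    intro g _ _ H D C M P Mc _ hc hmem
    have diag : ∀ i, M i i = 0 := fun i => self_neg_zero (hc.skewM i i)
    have key := bracket_mem_W N H D C M P Mc hc.skewM hc.bMM hc.bDH hc.bCH hc.bDC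
      hc.bHM hc.bDM hc.bCM hc.bMP hc.bHP hc.bDP hc.bCP
      (fun m n i j => by
        rw [hc.bPP]
        exact Submodule.smul_mem _ _ (Submodule.mem_span_singleton_self Mc))
      hc.central hc.Pbound (le_of_eq hc.spans.symm)
    set T := (({H, D, C, Mc} : Set g) ∪ {x | ∃ n i, x = P n i}) with hT
    have hW : M 0 1 ∈ Submodule.span ℂ T := by
      let WI : LieIdeal ℂ g := { Submodule.span ℂ T with lie_mem := fun {x m} _ => key x m }
      have hle : (⁅(⊤ : LieIdeal ℂ g), (⊤ : LieIdeal ℂ g)⁆ : LieIdeal ℂ g) ≤ WI := by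
        rw [LieSubmodule.lieIdeal_oper_eq_span, LieSubmodule.lieSpan_le]
        rintro z ⟨x, y, rfl⟩
        exact key x y
      exact hle hmem
    have hWtop : Submodule.span ℂ T = ⊤ := by
      rw [eq_top_iff, ← hc.spans]
      refine Submodule.span_le.mpr ?_
      rintro x ((hx | ⟨i, j, rfl⟩) | ⟨n, i, rfl⟩)
      · exact Submodule.subset_span (Or.inl hx)
      · fin_cases i <;> fin_cases j <;> simp only []
        · rw [diag]; exact zero_mem _
        · exact hW
        · show M 1 0 ∈ _
          rw [hc.skewM 0 1]; exact neg_mem hW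
        · rw [diag]; exact zero_mem _
      · exact Submodule.subset_span (Or.inr ⟨n, i, rfl⟩)
    let f : Fin 4 ⊕ (Fin (N+1) × Fin 2) → g := Sum.elim ![H, D, C, Mc] fun p => P p.1 p.2
    have hrange : Submodule.span ℂ (Set.range f) = ⊤ := by
      rw [eq_top_iff, ← hWtop]
      refine Submodule.span_le.mpr ?_
      rintro x (hx | ⟨n, i, rfl⟩)
      · simp only [Set.mem_insert_iff, Set.mem_singleton_iff] at hx
        rcases hx with rfl | rfl | rfl | rfl
        · exact Submodule.subset_span ⟨Sum.inl 0, rfl⟩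
        · exact Submodule.subset_span ⟨Sum.inl 1, rfl⟩
        · exact Submodule.subset_span ⟨Sum.inl 2, rfl⟩
        · exact Submodule.subset_span ⟨Sum.inl 3, rfl⟩
      · rcases le_or_gt n N with h | h
        · exact Submodule.subset_span ⟨Sum.inr (⟨n, by omega⟩, i), rfl⟩
        · rw [hc.Pbound n h]; exact zero_mem _
    have hcard := finrank_le_of_span_eq_top hrange
    rw [hc.dim] at hcard
    simp [Fintype.card_sum, Fintype.card_prod, Fintype.card_fin] at hcard
    omega
  · -- cga_ℓ(d,ℂ) is perfect for d ≥ 3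
    intro d hd g _ _ H D C M P hc
    have diag : ∀ i, M i i = 0 := fun i => self_neg_zero (hc.skewM i i)
    set derived := (⁅(⊤ : LieIdeal ℂ g), (⊤ : LieIdeal ℂ g)⁆ : LieIdeal ℂ g) with hder
    have hgen : (({H, D, C} : Set g) ∪ {x | ∃ i j, x = M i j} ∪ {x | ∃ n i, x = P n i})
        ⊆ ↑(derived.toSubmodule) := by
      rintro x ((hx | ⟨i, j, rfl⟩) | ⟨n, i, rfl⟩)
      · simp only [Set.mem_insert_iff, Set.mem_singleton_iff] at hx
        have hDH : ⁅D, H⁆ ∈ derived :=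
          LieSubmodule.lie_mem_lie (LieSubmodule.mem_top D) (LieSubmodule.mem_top H)
        have hCH : ⁅C, H⁆ ∈ derived :=
          LieSubmodule.lie_mem_lie (LieSubmodule.mem_top C) (LieSubmodule.mem_top H)
        have hDC : ⁅D, C⁆ ∈ derived :=
          LieSubmodule.lie_mem_lie (LieSubmodule.mem_top D) (LieSubmodule.mem_top C)
        rcases hx with rfl | rfl | rfl
        · have h2 := derived.smul_mem ((2:ℂ)⁻¹) hDH
          rw [hc.bDH, smul_smul] at h2
          norm_num at h2
          exact h2
        · rwa [hc.bCH] at hCH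
        · have h2 := derived.smul_mem ((-2:ℂ)⁻¹) hDC
          rw [hc.bDC, smul_smul] at h2
          norm_num at h2
          exact h2
      · rcases eq_or_ne i j with rfl | hij
        · rw [diag]; exact derived.zero_mem
        · obtain ⟨k, hki, hkj⟩ : ∃ k : Fin d, k ≠ i ∧ k ≠ j := by
            by_contra hcon
            push_neg at hcon
            have hsubs : (Finset.univ : Finset (Fin d)) ⊆ {i, j} := by
              intro k _
              rcases eq_or_ne k i with rfl | h
              · simp
              · simp [hcon k h]
            have hle := Finset.card_le_card hsubs
            have h2 : ({i, j} : Finset (Fin d)).card ≤ 2 :=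
              (Finset.card_insert_le _ _).trans (by simp)
            simp [Finset.card_univ] at hle
            omega
          have heq : ⁅M i k, M k j⁆ = M i j := by
            rw [hc.bMM, kron_ne' (Ne.symm hki), kron_ne' hkj, kron_ne' hij, kron_self']
            simp
          exact heq ▸ LieSubmodule.lie_mem_lie (LieSubmodule.mem_top _) (LieSubmodule.mem_top _)
      · have : Nontrivial (Fin d) := Fin.nontrivial_iff_two_le.mpr (by omega)
        obtain ⟨j, hj⟩ := exists_ne i
        have heq : ⁅M i j, P n j⁆ = P n i := by
          rw [hc.bMP, kron_ne' (Ne.symm hj), kron_self']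
          simp
        exact heq ▸ LieSubmodule.lie_mem_lie (LieSubmodule.mem_top _) (LieSubmodule.mem_top _)
    rw [eq_top_iff]
    intro x _
    exact Submodule.span_le.mpr hgen (hc.spans ▸ Submodule.mem_top)
end
end
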